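/- arXiv:0909.4040 — 3 statements merged into one kernel-verified Lean document; each statement's English description precedes it below -/
import Mathlib

section
/- The explicit 2x2 matrices S1 = [[x1, (y1+y2)/(y1 y2) - (z1+z2)x2/r],[0, x2]], S2 = [[y1+y2, 1/x1],[-y1 y2 x1, 0]], S3 = [[0, -r/(y1 y2 x1 x2)],[r, z1+z2]], where r^2 = x1 x2 y1 y2 z1 z2, satisfy the braid relation S1 S2 S3 = S2 S3 S1 = S3 S1 S2, and moreover (S1-x1)(S1-x2)=0, (S2-y1)(S2-y2)=0, (S3-z1)(S3-z2)=0. -/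
/-- The explicit 2×2 matrices giving the 2-dimensional representation of the
braid group `B = ⟨s₁,s₂,s₃ | s₁s₂s₃ = s₂s₃s₁ = s₃s₁s₂⟩` through the cyclotomic
Hecke algebra of `G₇`: they satisfy the braid relations and the quadratic
relations with the prescribed eigenvalues. -/
theorem stmt_0 (F : Type*) [Field F] (x1 x2 y1 y2 z1 z2 r : F)
    (hx1 : x1 ≠ 0) (hx2 : x2 ≠ 0) (hy1 : y1 ≠ 0) (hy2 : y2 ≠ 0)
    (hz1 : z1 ≠ 0) (hz2 : z2 ≠ 0) (hr : r ≠ 0)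
    (hr2 : r ^ 2 = x1 * x2 * y1 * y2 * z1 * z2)
    (S1 S2 S3 : Matrix (Fin 2) (Fin 2) F)
    (hS1 : S1 = !![x1, (y1 + y2) / (y1 * y2) - (z1 + z2) * x2 / r; 0, x2])
    (hS2 : S2 = !![y1 + y2, 1 / x1; -(y1 * y2 * x1), 0])
    (hS3 : S3 = !![0, -r / (y1 * y2 * x1 * x2); r, z1 + z2]) :
    S1 * S2 * S3 = S2 * S3 * S1 ∧ S2 * S3 * S1 = S3 * S1 * S2 ∧
    (S1 - x1 • (1 : Matrix (Fin 2) (Fin 2) F)) * (S1 - x2 • 1) = 0 ∧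
    (S2 - y1 • (1 : Matrix (Fin 2) (Fin 2) F)) * (S2 - y2 • 1) = 0 ∧
    (S3 - z1 • (1 : Matrix (Fin 2) (Fin 2) F)) * (S3 - z2 • 1) = 0 := by
  have h1 : (y1 * y2 * r) • S1 =
      !![x1 * (y1 * y2 * r), (y1 + y2) * r - (z1 + z2) * x2 * (y1 * y2);
         0, x2 * (y1 * y2 * r)] := by
    subst hS1
    ext i j
    fin_cases i <;> fin_cases j <;>
      simp [Matrix.smul_apply] <;>
      first
        | ring1
        | (field_simp <;> ring1)
  have h2 : x1 • S2 = !![(y1 + y2) * x1, 1; -(y1 * y2 * (x1 * x1)), 0] := by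
    subst hS2
    ext i j
    fin_cases i <;> fin_cases j <;>
      simp [Matrix.smul_apply] <;>
      first
        | ring1
        | (field_simp <;> ring1)
  have h3 : (y1 * y2 * x1 * x2) • S3 =
      !![0, -r; r * (y1 * y2 * x1 * x2), (z1 + z2) * (y1 * y2 * x1 * x2)] := by
    subst hS3
    ext i j
    fin_cases i <;> fin_cases j <;>
      simp [Matrix.smul_apply] <;>
      first
        | ring1
        | (field_simp <;> ring1)
  have hK : (y1 * y2 * r) * (x1 * (y1 * y2 * x1 * x2)) ≠ 0 := by
    simp [hx1, hx2, hy1, hy2, hr]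
  have key1 : ((y1 * y2 * r) • S1) * ((x1) • S2) * ((y1 * y2 * x1 * x2) • S3) =
      ((x1) • S2) * ((y1 * y2 * x1 * x2) • S3) * ((y1 * y2 * r) • S1) := by
    rw [h1, h2, h3]
    ext i j
    fin_cases i <;> fin_cases j <;>
      simp [Matrix.mul_apply, Fin.sum_univ_succ] <;> ring
  have key2 : ((x1) • S2) * ((y1 * y2 * x1 * x2) • S3) * ((y1 * y2 * r) • S1) =
      ((y1 * y2 * x1 * x2) • S3) * ((y1 * y2 * r) • S1) * ((x1) • S2) := by
    rw [h1, h2, h3]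
    ext i j
    fin_cases i <;> fin_cases j <;>
      simp [Matrix.mul_apply, Fin.sum_univ_succ] <;> ring
  simp only [Matrix.smul_mul, Matrix.mul_smul, smul_smul] at key1 key2
  refine ⟨?_, ?_, ?_, ?_, ?_⟩
  · have e1 : (y1 * y2 * x1 * x2 * (x1 * (y1 * y2 * r))) • (S1 * S2 * S3) =
        (y1 * y2 * x1 * x2 * (x1 * (y1 * y2 * r))) • (S2 * S3 * S1) := by
      rw [key1]; congr 1; ring
    exact smul_right_injective (Matrix (Fin 2) (Fin 2) F)
      (by simp [hx1, hx2, hy1, hy2, hr]) e1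
  · have e2 : (y1 * y2 * r * (y1 * y2 * x1 * x2 * x1)) • (S2 * S3 * S1) =
        (y1 * y2 * r * (y1 * y2 * x1 * x2 * x1)) • (S3 * S1 * S2) := by
      rw [key2]; congr 1; ring
    exact smul_right_injective (Matrix (Fin 2) (Fin 2) F)
      (by simp [hx1, hx2, hy1, hy2, hr]) e2
  · subst hS1
    ext i j
    fin_cases i <;> fin_cases j <;>
      simp [Matrix.mul_apply, Fin.sum_univ_succ, Matrix.one_apply] <;> ring
  · subst hS2
    ext i j
    fin_cases i <;> fin_cases j <;>
      simp [Matrix.mul_apply, Fin.sum_univ_succ, Matrix.one_apply] <;>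
      first
        | ring1
        | (field_simp <;>
            first
              | ring1
              | linear_combination hr2
              | linear_combination -hr2)
        | (field_simp <;> ring1)
  · subst hS3
    ext i j
    fin_cases i <;> fin_cases j <;>
      simp [Matrix.mul_apply, Fin.sum_univ_succ, Matrix.one_apply] <;>
      first
        | ring1
        | (field_simp <;>
            first
              | ring1
              | linear_combination hr2
              | linear_combination -hr2)
        | (field_simp <;> ring1)
end

section
/- Let H be a finite-dimensional symmetric algebra over a field with symmetrizing form t, let W ⊆ H be a finite set containing 1 such that the matrix M = (t(T_w T_{w'}))_{w,w' ∈ W} is invertible over a subring A of the base field (i.e., M ∈ GL_{|W|}(A)), and such that {T_w : w ∈ W} spans H over the fraction field of A. If S is a generating set of H as an A-algebra such that t(T_s T_w T_{w'}) ∈ A for all s ∈ S and w, w' ∈ W, then the A-span of {T_w : w ∈ W} is closed under left multiplication by each T_s, s ∈ S, and hence {T_w : w ∈ W} is an A-basis of the A-subalgebra of H generated by S and the T_w. -/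
/-- Let `H` be a finite-dimensional symmetric algebra over a field `K` with
symmetrizing form `t`, `A` a subring of `K`, and `{T_w}_{w ∈ W}` a finite
family in `H` containing `1`, spanning `H` over `K`, whose Gram matrix
`(t (T_w * T_w'))` lies in and is invertible over `A`.  If `S` is a generating
set of `H` as an `A`-algebra such that `t (T_s * T_w * T_w') ∈ A` for all
`s ∈ S` and `w, w' ∈ W`, then the `A`-span of the `T_w` is closed under left
multiplication by each `T_s`, `s ∈ S`. -/
theorem stmt_4 (K : Type*) [Field K] (H : Type*) [Ring H] [Algebra K H]
    [FiniteDimensional K H] (A : Subring K)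
    (t : H →ₗ[K] K) (htr : ∀ a b : H, t (a * b) = t (b * a))
    (hnd : ∀ a : H, (∀ b : H, t (a * b) = 0) → a = 0)
    (W : Type*) [Fintype W] [DecidableEq W] (T : W → H)
    (hone : ∃ w : W, T w = 1)
    (hspan : Submodule.span K (Set.range T) = ⊤)
    (M : Matrix W W A)
    (hM : ∀ w w' : W, (M w w' : K) = t (T w * T w'))
    (hMinv : IsUnit M)
    (S : Set H) (hgen : Algebra.adjoin A (S ∪ Set.range T) = ⊤)
    (hSA : ∀ s ∈ S, ∀ w w' : W, t (s * T w * T w') ∈ A) :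
    ∀ s ∈ S, ∀ w : W, s * T w ∈ Submodule.span A (Set.range T) := by
  intro s hs w
  obtain ⟨u, hu⟩ := hMinv
  set N : Matrix W W A := ↑u⁻¹ with hN
  have hMN : M * N = 1 := by rw [← hu, hN]; exact u.mul_inv
  -- vector of traces, in A
  set v : W → A := fun w'' => ⟨t (s * T w * T w''), hSA s hs w w''⟩ with hv
  set a : W → A := N.mulVec v with ha
  -- symmetry of M
  have hMsymm : ∀ w₁ w₂ : W, M w₁ w₂ = M w₂ w₁ := by
    intro w₁ w₂
    have : ((M w₁ w₂ : A) : K) = ((M w₂ w₁ : A) : K) := by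
      rw [hM, hM, htr]
    exact_mod_cast this
  -- key identity over A
  have key : ∀ w' : W, (∑ u', a u' * M u' w') = v w' := by
    intro w'
    have h1 : (∑ u', a u' * M u' w') = (M.mulVec a) w' := by
      rw [Matrix.mulVec, dotProduct]
      exact Finset.sum_congr rfl fun u' _ => by rw [hMsymm u' w', mul_comm]
    rw [h1, ha, Matrix.mulVec_mulVec, hMN, Matrix.one_mulVec]
  -- the trace identity over K
  have keyK : ∀ w' : W, t ((s * T w) * T w')
      = ∑ u', (a u' : K) * t (T u' * T w') := by
    intro w'
    have := congrArg (fun x : A => (x : K)) (key w')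
    push_cast at this
    change _ = t (s * T w * T w') at this
    rw [mul_assoc] at this ⊢
    rw [← this]
    exact Finset.sum_congr rfl fun u' _ => by rw [hM]
  -- define the difference
  set d : H := s * T w - ∑ u', (a u' : K) • T u' with hd
  have hdT : ∀ w' : W, t (d * T w') = 0 := by
    intro w'
    rw [hd, sub_mul, map_sub, Finset.sum_mul, map_sum, keyK w', sub_eq_zero]
    exact Finset.sum_congr rfl fun u' _ => by
      rw [smul_mul_assoc, map_smul, smul_eq_mul]
  have hd0 : d = 0 := by
    apply hnd
    intro b
    have hb : b ∈ Submodule.span K (Set.range T) := hspan ▸ Submodule.mem_top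
    induction hb using Submodule.span_induction with
    | mem x hx => obtain ⟨w', rfl⟩ := hx; exact hdT w'
    | zero => simp
    | add x y _ _ hx hy => rw [mul_add, map_add, hx, hy, add_zero]
    | smul c x _ hx => rw [mul_smul_comm, map_smul, hx, smul_zero]
  have heq : s * T w = ∑ u', (a u' : K) • T u' := by
    have := sub_eq_zero.mp hd0
    exact this
  rw [heq]
  apply Submodule.sum_mem
  intro u' _
  have : (a u' : K) • T u' = a u' • T u' := rfl
  rw [this]
  exact Submodule.smul_mem _ _ (Submodule.subset_span ⟨u', rfl⟩)
end

section
/- In the group G4 presented as <s, t | s t s = t s t, s^3 = t^3 = 1>, the group has order 24, the element (s t)^3 is central, and the center of G4 has order 2, generated by (s t)^3. -/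
namespace Stmt6

/-- Relations for `G₄ = ⟨s,t | sts = tst, s³ = t³ = 1⟩`. -/
def rels : Set (FreeGroup (Fin 2)) :=
  { FreeGroup.of 0 * FreeGroup.of 1 * FreeGroup.of 0 *
      (FreeGroup.of 1 * FreeGroup.of 0 * FreeGroup.of 1)⁻¹,
    FreeGroup.of 0 ^ 3, FreeGroup.of 1 ^ 3 }

abbrev G4 := PresentedGroup rels

def s : G4 := PresentedGroup.of 0
def t : G4 := PresentedGroup.of 1

theorem rel_one : ∀ r ∈ rels, PresentedGroup.mk rels r = 1 := fun r hr =>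
  (QuotientGroup.eq_one_iff _).mpr (Subgroup.subset_normalClosure hr)

theorem hbraid : s * t * s = t * s * t := by
  have h := rel_one _ (Set.mem_insert _ _)
  simp only [map_mul, map_inv] at h
  exact mul_inv_eq_one.mp h

theorem hS3 : s * s * s = 1 := by
  have h := rel_one ((FreeGroup.of 0)^3) (by right; left; rfl)
  rw [map_pow] at h
  have h2 : s^3 = 1 := h
  calc s * s * s = s^3 := by rw [pow_succ, pow_succ, pow_one]
  _ = 1 := h2

theorem hT3 : t * t * t = 1 := by
  have h := rel_one ((FreeGroup.of 1)^3) (by right; right; rfl)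
  rw [map_pow] at h
  have h2 : t^3 = 1 := h
  calc t * t * t = t^3 := by rw [pow_succ, pow_succ, pow_one]
  _ = 1 := h2

theorem hs1 : s * (s * s) = 1 := by rw [← mul_assoc]; exact hS3
theorem ht1 : t * (t * t) = 1 := by rw [← mul_assoc]; exact hT3
theorem hs2 (x : G4) : s * (s * (s * x)) = x := by
  calc s * (s * (s * x)) = (s * s * s) * x := by group
  _ = x := by rw [hS3, one_mul]
theorem ht2 (x : G4) : t * (t * (t * x)) = x := by
  calc t * (t * (t * x)) = (t * t * t) * x := by group
  _ = x := by rw [hT3, one_mul]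
theorem hb1 : s * (t * s) = t * (s * t) := by
  calc s * (t * s) = s * t * s := by group
  _ = t * s * t := hbraid
  _ = t * (s * t) := by group
theorem hb2 (x : G4) : s * (t * (s * x)) = t * (s * (t * x)) := by
  calc s * (t * (s * x)) = (s * t * s) * x := by group
  _ = (t * s * t) * x := by rw [hbraid]
  _ = t * (s * (t * x)) := by group

theorem eq0 : (1) * s = s := by
  group

theorem eq1 : (1) * t = t := by
  group

theorem eq2 : (s) * s = s * (s) := by
  group

theorem eq3 : (s) * t = s * (t) := by
  group

theorem eq4 : (t) * s = t * (s) := by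
  group

theorem eq5 : (t) * t = t * (t) := by
  group

theorem eq6 : (s * (s)) * s = 1 := by
  have h : s * (s * (s)) = 1 := by
    conv_lhs => rw [hs1]
    try rfl
  exact Eq.trans (by group) h

theorem eq7 : (s * (s)) * t = s * (s * (t)) := by
  group

theorem eq8 : (s * (t)) * s = s * (t * (s)) := by
  group

theorem eq9 : (s * (t)) * t = s * (t * (t)) := by
  group

theorem eq10 : (t * (s)) * s = t * (s * (s)) := by
  group

theorem eq11 : (t * (s)) * t = s * (t * (s)) := by
  have h : t * (s * (t)) = s * (t * (s)) := by
    conv_lhs => rw [← hb1]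
    try rfl
  exact Eq.trans (by group) h

theorem eq12 : (t * (t)) * s = t * (t * (s)) := by
  group

theorem eq13 : (t * (t)) * t = 1 := by
  have h : t * (t * (t)) = 1 := by
    conv_lhs => rw [ht1]
    try rfl
  exact Eq.trans (by group) h

theorem eq14 : (s * (s * (t))) * s = s * (s * (t * (s))) := by
  group

theorem eq15 : (s * (s * (t))) * t = s * (s * (t * (t))) := by
  group

theorem eq16 : (s * (t * (s))) * s = s * (t * (s * (s))) := by
  group

theorem eq17 : (s * (t * (s))) * t = s * (s * (t * (s))) := by
  have h : s * (t * (s * (t))) = s * (s * (t * (s))) := by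
    conv_lhs => rw [← hb1]
    try rfl
  exact Eq.trans (by group) h

theorem eq18 : (s * (t * (t))) * s = s * (t * (t * (s))) := by
  group

theorem eq19 : (s * (t * (t))) * t = s := by
  have h : s * (t * (t * (t))) = s := by
    conv_lhs => rw [ht1, mul_one]
    try rfl
  exact Eq.trans (by group) h

theorem eq20 : (t * (s * (s))) * s = t := by
  have h : t * (s * (s * (s))) = t := by
    conv_lhs => rw [hs1, mul_one]
    try rfl
  exact Eq.trans (by group) h

theorem eq21 : (t * (s * (s))) * t = t * (s * (s * (t))) := by
  group

theorem eq22 : (t * (t * (s))) * s = t * (t * (s * (s))) := by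
  group

theorem eq23 : (t * (t * (s))) * t = s * (t * (s * (s))) := by
  have h : t * (t * (s * (t))) = s * (t * (s * (s))) := by
    conv_lhs => rw [← hb1]
    conv_lhs => rw [← hb2 (s)]
    try rfl
  exact Eq.trans (by group) h

theorem eq24 : (s * (s * (t * (s)))) * s = s * (s * (t * (s * (s)))) := by
  group

theorem eq25 : (s * (s * (t * (s)))) * t = t * (s) := by
  have h : s * (s * (t * (s * (t)))) = t * (s) := by
    conv_lhs => rw [← hb1]
    conv_lhs => rw [hs2 (t * (s))]
    try rfl
  exact Eq.trans (by group) h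

theorem eq26 : (s * (s * (t * (t)))) * s = s * (s * (t * (t * (s)))) := by
  group

theorem eq27 : (s * (s * (t * (t)))) * t = s * (s) := by
  have h : s * (s * (t * (t * (t)))) = s * (s) := by
    conv_lhs => rw [ht1, mul_one]
    try rfl
  exact Eq.trans (by group) h

theorem eq28 : (s * (t * (s * (s)))) * s = s * (t) := by
  have h : s * (t * (s * (s * (s)))) = s * (t) := by
    conv_lhs => rw [hs1, mul_one]
    try rfl
  exact Eq.trans (by group) h

theorem eq29 : (s * (t * (s * (s)))) * t = s * (t * (s * (s * (t)))) := by
  group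

theorem eq30 : (s * (t * (t * (s)))) * s = s * (t * (t * (s * (s)))) := by
  group

theorem eq31 : (s * (t * (t * (s)))) * t = s * (s * (t * (s * (s)))) := by
  have h : s * (t * (t * (s * (t)))) = s * (s * (t * (s * (s)))) := by
    conv_lhs => rw [← hb1]
    conv_lhs => rw [← hb2 (s)]
    try rfl
  exact Eq.trans (by group) h

theorem eq32 : (t * (s * (s * (t)))) * s = s * (t * (s * (s * (t)))) := by
  have h : t * (s * (s * (t * (s)))) = s * (t * (s * (s * (t)))) := by
    conv_lhs => rw [hb1]
    conv_lhs => rw [← hb2 (s * (t))]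
    try rfl
  exact Eq.trans (by group) h

theorem eq33 : (t * (s * (s * (t)))) * t = s * (s * (t * (t * (s)))) := by
  have h : t * (s * (s * (t * (t)))) = s * (s * (t * (t * (s)))) := by
    conv_lhs => rw [← hs2 (t * (s * (s * (t * (t)))))]
    conv_lhs => rw [hb2 (s * (t * (t)))]
    conv_lhs => rw [hb2 (t * (t))]
    conv_lhs => rw [ht1, mul_one]
    try rfl
  exact Eq.trans (by group) h

theorem eq34 : (t * (t * (s * (s)))) * s = t * (t) := by
  have h : t * (t * (s * (s * (s)))) = t * (t) := by
    conv_lhs => rw [hs1, mul_one]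
    try rfl
  exact Eq.trans (by group) h

theorem eq35 : (t * (t * (s * (s)))) * t = s * (t * (t * (s * (s)))) := by
  have h : t * (t * (s * (s * (t)))) = s * (t * (t * (s * (s)))) := by
    conv_lhs => rw [← ht2 (s * (t))]
    conv_lhs => rw [← hb1]
    conv_lhs => rw [← hb2 (s)]
    conv_lhs => rw [hb2 (t * (s * (s)))]
    conv_lhs => rw [ht2 (s * (t * (t * (s * (s)))))]
    try rfl
  exact Eq.trans (by group) h

theorem eq36 : (s * (s * (t * (s * (s))))) * s = s * (s * (t)) := by
  have h : s * (s * (t * (s * (s * (s))))) = s * (s * (t)) := by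
    conv_lhs => rw [hs1, mul_one]
    try rfl
  exact Eq.trans (by group) h

theorem eq37 : (s * (s * (t * (s * (s))))) * t = s * (s * (t * (s * (s * (t))))) := by
  group

theorem eq38 : (s * (s * (t * (t * (s))))) * s = s * (s * (t * (t * (s * (s))))) := by
  group

theorem eq39 : (s * (s * (t * (t * (s))))) * t = t * (s * (s)) := by
  have h : s * (s * (t * (t * (s * (t))))) = t * (s * (s)) := by
    conv_lhs => rw [← hb1]
    conv_lhs => rw [← hb2 (s)]
    conv_lhs => rw [hs2 (t * (s * (s)))]
    try rfl
  exact Eq.trans (by group) h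

theorem eq40 : (s * (t * (s * (s * (t))))) * s = s * (s * (t * (s * (s * (t))))) := by
  have h : s * (t * (s * (s * (t * (s))))) = s * (s * (t * (s * (s * (t))))) := by
    conv_lhs => rw [hb1]
    conv_lhs => rw [← hb2 (s * (t))]
    try rfl
  exact Eq.trans (by group) h

theorem eq41 : (s * (t * (s * (s * (t))))) * t = t * (t * (s)) := by
  have h : s * (t * (s * (s * (t * (t))))) = t * (t * (s)) := by
    conv_lhs => rw [hb2 (s * (t * (t)))]
    conv_lhs => rw [hb2 (t * (t))]
    conv_lhs => rw [ht1, mul_one]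
    try rfl
  exact Eq.trans (by group) h

theorem eq42 : (s * (t * (t * (s * (s))))) * s = s * (t * (t)) := by
  have h : s * (t * (t * (s * (s * (s))))) = s * (t * (t)) := by
    conv_lhs => rw [hs1, mul_one]
    try rfl
  exact Eq.trans (by group) h

theorem eq43 : (s * (t * (t * (s * (s))))) * t = s * (s * (t * (t * (s * (s))))) := by
  have h : s * (t * (t * (s * (s * (t))))) = s * (s * (t * (t * (s * (s))))) := by
    conv_lhs => rw [← ht2 (s * (t))]
    conv_lhs => rw [← hb1]
    conv_lhs => rw [← hb2 (s)]
    conv_lhs => rw [hb2 (t * (s * (s)))]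
    conv_lhs => rw [ht2 (s * (t * (t * (s * (s)))))]
    try rfl
  exact Eq.trans (by group) h

theorem eq44 : (s * (s * (t * (s * (s * (t)))))) * s = t * (s * (s * (t))) := by
  have h : s * (s * (t * (s * (s * (t * (s)))))) = t * (s * (s * (t))) := by
    conv_lhs => rw [hb1]
    conv_lhs => rw [← hb2 (s * (t))]
    conv_lhs => rw [hs2 (t * (s * (s * (t))))]
    try rfl
  exact Eq.trans (by group) h

theorem eq45 : (s * (s * (t * (s * (s * (t)))))) * t = s * (t * (t * (s))) := by
  have h : s * (s * (t * (s * (s * (t * (t)))))) = s * (t * (t * (s))) := by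
    conv_lhs => rw [hb2 (s * (t * (t)))]
    conv_lhs => rw [hb2 (t * (t))]
    conv_lhs => rw [ht1, mul_one]
    try rfl
  exact Eq.trans (by group) h

theorem eq46 : (s * (s * (t * (t * (s * (s)))))) * s = s * (s * (t * (t))) := by
  have h : s * (s * (t * (t * (s * (s * (s)))))) = s * (s * (t * (t))) := by
    conv_lhs => rw [hs1, mul_one]
    try rfl
  exact Eq.trans (by group) h

theorem eq47 : (s * (s * (t * (t * (s * (s)))))) * t = t * (t * (s * (s))) := by
  have h : s * (s * (t * (t * (s * (s * (t)))))) = t * (t * (s * (s))) := by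
    conv_lhs => rw [← ht2 (s * (t))]
    conv_lhs => rw [← hb1]
    conv_lhs => rw [← hb2 (s)]
    conv_lhs => rw [hb2 (t * (s * (s)))]
    conv_lhs => rw [ht2 (s * (t * (t * (s * (s)))))]
    conv_lhs => rw [hs2 (t * (t * (s * (s))))]
    try rfl
  exact Eq.trans (by group) h

theorem eq48 : (s * (t * (s * (t * (s * (t)))))) * s = s * (s * (t * (s * (t * (s * (t)))))) := by
  have h : s * (t * (s * (t * (s * (t * (s)))))) = s * (s * (t * (s * (t * (s * (t)))))) := by
    conv_lhs => rw [← hb2 (s * (t * (s)))]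
    conv_lhs => rw [hb1]
    try rfl
  exact Eq.trans (by group) h

theorem eq49 : (s * (t * (s * (t * (s * (t)))))) * t = t * (s * (t * (s * (t * (s * (t)))))) := by
  have h : s * (t * (s * (t * (s * (t * (t)))))) = t * (s * (t * (s * (t * (s * (t)))))) := by
    conv_lhs => rw [← hb2 (t)]
    conv_lhs => rw [hb2 (s * (t * (s * (t))))]
    try rfl
  exact Eq.trans (by group) h

def wf : Nat → G4
  | 0 => 1
  | 1 => s
  | 2 => t
  | 3 => s * (s)
  | 4 => s * (t)
  | 5 => t * (s)
  | 6 => t * (t)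
  | 7 => s * (s * (t))
  | 8 => s * (t * (s))
  | 9 => s * (t * (t))
  | 10 => t * (s * (s))
  | 11 => t * (t * (s))
  | 12 => s * (s * (t * (s)))
  | 13 => s * (s * (t * (t)))
  | 14 => s * (t * (s * (s)))
  | 15 => s * (t * (t * (s)))
  | 16 => t * (s * (s * (t)))
  | 17 => t * (t * (s * (s)))
  | 18 => s * (s * (t * (s * (s))))
  | 19 => s * (s * (t * (t * (s))))
  | 20 => s * (t * (s * (s * (t))))
  | 21 => s * (t * (t * (s * (s))))
  | 22 => s * (s * (t * (s * (s * (t)))))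
  | 23 => s * (s * (t * (t * (s * (s)))))
  | _ => 1

def f : Fin 24 → G4 := fun i => wf i.val

theorem hcs : ∀ i : Fin 24, ∃ j : Fin 24, f i * s = f j := by
  intro i
  fin_cases i
  · refine ⟨⟨1, by norm_num⟩, ?_⟩
    show (1) * s = (s)
    exact eq0
  · refine ⟨⟨3, by norm_num⟩, ?_⟩
    show (s) * s = (s * (s))
    exact eq2
  · refine ⟨⟨5, by norm_num⟩, ?_⟩
    show (t) * s = (t * (s))
    exact eq4
  · refine ⟨⟨0, by norm_num⟩, ?_⟩
    show (s * (s)) * s = (1)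
    exact eq6
  · refine ⟨⟨8, by norm_num⟩, ?_⟩
    show (s * (t)) * s = (s * (t * (s)))
    exact eq8
  · refine ⟨⟨10, by norm_num⟩, ?_⟩
    show (t * (s)) * s = (t * (s * (s)))
    exact eq10
  · refine ⟨⟨11, by norm_num⟩, ?_⟩
    show (t * (t)) * s = (t * (t * (s)))
    exact eq12
  · refine ⟨⟨12, by norm_num⟩, ?_⟩
    show (s * (s * (t))) * s = (s * (s * (t * (s))))
    exact eq14
  · refine ⟨⟨14, by norm_num⟩, ?_⟩
    show (s * (t * (s))) * s = (s * (t * (s * (s))))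
    exact eq16
  · refine ⟨⟨15, by norm_num⟩, ?_⟩
    show (s * (t * (t))) * s = (s * (t * (t * (s))))
    exact eq18
  · refine ⟨⟨2, by norm_num⟩, ?_⟩
    show (t * (s * (s))) * s = (t)
    exact eq20
  · refine ⟨⟨17, by norm_num⟩, ?_⟩
    show (t * (t * (s))) * s = (t * (t * (s * (s))))
    exact eq22
  · refine ⟨⟨18, by norm_num⟩, ?_⟩
    show (s * (s * (t * (s)))) * s = (s * (s * (t * (s * (s)))))
    exact eq24
  · refine ⟨⟨19, by norm_num⟩, ?_⟩
    show (s * (s * (t * (t)))) * s = (s * (s * (t * (t * (s)))))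
    exact eq26
  · refine ⟨⟨4, by norm_num⟩, ?_⟩
    show (s * (t * (s * (s)))) * s = (s * (t))
    exact eq28
  · refine ⟨⟨21, by norm_num⟩, ?_⟩
    show (s * (t * (t * (s)))) * s = (s * (t * (t * (s * (s)))))
    exact eq30
  · refine ⟨⟨20, by norm_num⟩, ?_⟩
    show (t * (s * (s * (t)))) * s = (s * (t * (s * (s * (t)))))
    exact eq32
  · refine ⟨⟨6, by norm_num⟩, ?_⟩
    show (t * (t * (s * (s)))) * s = (t * (t))
    exact eq34
  · refine ⟨⟨7, by norm_num⟩, ?_⟩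
    show (s * (s * (t * (s * (s))))) * s = (s * (s * (t)))
    exact eq36
  · refine ⟨⟨23, by norm_num⟩, ?_⟩
    show (s * (s * (t * (t * (s))))) * s = (s * (s * (t * (t * (s * (s))))))
    exact eq38
  · refine ⟨⟨22, by norm_num⟩, ?_⟩
    show (s * (t * (s * (s * (t))))) * s = (s * (s * (t * (s * (s * (t))))))
    exact eq40
  · refine ⟨⟨9, by norm_num⟩, ?_⟩
    show (s * (t * (t * (s * (s))))) * s = (s * (t * (t)))
    exact eq42
  · refine ⟨⟨16, by norm_num⟩, ?_⟩
    show (s * (s * (t * (s * (s * (t)))))) * s = (t * (s * (s * (t))))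
    exact eq44
  · refine ⟨⟨13, by norm_num⟩, ?_⟩
    show (s * (s * (t * (t * (s * (s)))))) * s = (s * (s * (t * (t))))
    exact eq46

theorem hct : ∀ i : Fin 24, ∃ j : Fin 24, f i * t = f j := by
  intro i
  fin_cases i
  · refine ⟨⟨2, by norm_num⟩, ?_⟩
    show (1) * t = (t)
    exact eq1
  · refine ⟨⟨4, by norm_num⟩, ?_⟩
    show (s) * t = (s * (t))
    exact eq3
  · refine ⟨⟨6, by norm_num⟩, ?_⟩
    show (t) * t = (t * (t))
    exact eq5
  · refine ⟨⟨7, by norm_num⟩, ?_⟩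
    show (s * (s)) * t = (s * (s * (t)))
    exact eq7
  · refine ⟨⟨9, by norm_num⟩, ?_⟩
    show (s * (t)) * t = (s * (t * (t)))
    exact eq9
  · refine ⟨⟨8, by norm_num⟩, ?_⟩
    show (t * (s)) * t = (s * (t * (s)))
    exact eq11
  · refine ⟨⟨0, by norm_num⟩, ?_⟩
    show (t * (t)) * t = (1)
    exact eq13
  · refine ⟨⟨13, by norm_num⟩, ?_⟩
    show (s * (s * (t))) * t = (s * (s * (t * (t))))
    exact eq15
  · refine ⟨⟨12, by norm_num⟩, ?_⟩
    show (s * (t * (s))) * t = (s * (s * (t * (s))))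
    exact eq17
  · refine ⟨⟨1, by norm_num⟩, ?_⟩
    show (s * (t * (t))) * t = (s)
    exact eq19
  · refine ⟨⟨16, by norm_num⟩, ?_⟩
    show (t * (s * (s))) * t = (t * (s * (s * (t))))
    exact eq21
  · refine ⟨⟨14, by norm_num⟩, ?_⟩
    show (t * (t * (s))) * t = (s * (t * (s * (s))))
    exact eq23
  · refine ⟨⟨5, by norm_num⟩, ?_⟩
    show (s * (s * (t * (s)))) * t = (t * (s))
    exact eq25
  · refine ⟨⟨3, by norm_num⟩, ?_⟩
    show (s * (s * (t * (t)))) * t = (s * (s))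
    exact eq27
  · refine ⟨⟨20, by norm_num⟩, ?_⟩
    show (s * (t * (s * (s)))) * t = (s * (t * (s * (s * (t)))))
    exact eq29
  · refine ⟨⟨18, by norm_num⟩, ?_⟩
    show (s * (t * (t * (s)))) * t = (s * (s * (t * (s * (s)))))
    exact eq31
  · refine ⟨⟨19, by norm_num⟩, ?_⟩
    show (t * (s * (s * (t)))) * t = (s * (s * (t * (t * (s)))))
    exact eq33
  · refine ⟨⟨21, by norm_num⟩, ?_⟩
    show (t * (t * (s * (s)))) * t = (s * (t * (t * (s * (s)))))
    exact eq35
  · refine ⟨⟨22, by norm_num⟩, ?_⟩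
    show (s * (s * (t * (s * (s))))) * t = (s * (s * (t * (s * (s * (t))))))
    exact eq37
  · refine ⟨⟨10, by norm_num⟩, ?_⟩
    show (s * (s * (t * (t * (s))))) * t = (t * (s * (s)))
    exact eq39
  · refine ⟨⟨11, by norm_num⟩, ?_⟩
    show (s * (t * (s * (s * (t))))) * t = (t * (t * (s)))
    exact eq41
  · refine ⟨⟨23, by norm_num⟩, ?_⟩
    show (s * (t * (t * (s * (s))))) * t = (s * (s * (t * (t * (s * (s))))))
    exact eq43
  · refine ⟨⟨15, by norm_num⟩, ?_⟩
    show (s * (s * (t * (s * (s * (t)))))) * t = (s * (t * (t * (s))))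
    exact eq45
  · refine ⟨⟨17, by norm_num⟩, ?_⟩
    show (s * (s * (t * (t * (s * (s)))))) * t = (t * (t * (s * (s))))
    exact eq47


abbrev SL23 := Matrix.SpecialLinearGroup (Fin 2) (ZMod 3)
instance : DecidableEq SL23 := fun a b => decidable_of_iff (a.1 = b.1) Subtype.ext_iff.symm
def A : SL23 := ⟨!![1,1;0,1], by decide⟩
def B : SL23 := ⟨!![1,0;-1,1], by decide⟩
def fgen : Fin 2 → SL23 := ![A, B]

theorem hrel : ∀ r ∈ rels, FreeGroup.lift fgen r = 1 := by
  intro r hr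
  simp only [rels, Set.mem_insert_iff, Set.mem_singleton_iff] at hr
  rcases hr with rfl | rfl | rfl <;>
    simp only [map_mul, map_inv, map_pow, FreeGroup.lift_apply_of] <;> decide

def φ : G4 →* SL23 := PresentedGroup.toGroup hrel

theorem φs : φ s = A := PresentedGroup.toGroup.of hrel
theorem φt : φ t = B := PresentedGroup.toGroup.of hrel

def wm : Nat → SL23
  | 0 => ⟨!![1,0;0,1], by decide⟩
  | 1 => ⟨!![1,1;0,1], by decide⟩
  | 2 => ⟨!![1,0;2,1], by decide⟩
  | 3 => ⟨!![1,2;0,1], by decide⟩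
  | 4 => ⟨!![0,1;2,1], by decide⟩
  | 5 => ⟨!![1,1;2,0], by decide⟩
  | 6 => ⟨!![1,0;1,1], by decide⟩
  | 7 => ⟨!![2,2;2,1], by decide⟩
  | 8 => ⟨!![0,1;2,0], by decide⟩
  | 9 => ⟨!![2,1;1,1], by decide⟩
  | 10 => ⟨!![1,2;2,2], by decide⟩
  | 11 => ⟨!![1,1;1,2], by decide⟩
  | 12 => ⟨!![2,1;2,0], by decide⟩
  | 13 => ⟨!![0,2;1,1], by decide⟩
  | 14 => ⟨!![0,1;2,2], by decide⟩
  | 15 => ⟨!![2,0;1,2], by decide⟩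
  | 16 => ⟨!![2,2;0,2], by decide⟩
  | 17 => ⟨!![1,2;1,0], by decide⟩
  | 18 => ⟨!![2,0;2,2], by decide⟩
  | 19 => ⟨!![0,2;1,2], by decide⟩
  | 20 => ⟨!![2,1;0,2], by decide⟩
  | 21 => ⟨!![2,2;1,0], by decide⟩
  | 22 => ⟨!![2,0;0,2], by decide⟩
  | 23 => ⟨!![0,2;1,0], by decide⟩
  | _ => 1

def w24 : Fin 24 → SL23 := fun i => wm i.val

theorem hφf : ∀ i : Fin 24, φ (f i) = w24 i := by
  intro i
  fin_cases i
  · show φ (1) = _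
    simp only [map_mul, map_one, φs, φt]
    decide
  · show φ (s) = _
    simp only [map_mul, map_one, φs, φt]
    decide
  · show φ (t) = _
    simp only [map_mul, map_one, φs, φt]
    decide
  · show φ (s * (s)) = _
    simp only [map_mul, map_one, φs, φt]
    decide
  · show φ (s * (t)) = _
    simp only [map_mul, map_one, φs, φt]
    decide
  · show φ (t * (s)) = _
    simp only [map_mul, map_one, φs, φt]
    decide
  · show φ (t * (t)) = _
    simp only [map_mul, map_one, φs, φt]
    decide
  · show φ (s * (s * (t))) = _
    simp only [map_mul, map_one, φs, φt]
    decide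
  · show φ (s * (t * (s))) = _
    simp only [map_mul, map_one, φs, φt]
    decide
  · show φ (s * (t * (t))) = _
    simp only [map_mul, map_one, φs, φt]
    decide
  · show φ (t * (s * (s))) = _
    simp only [map_mul, map_one, φs, φt]
    decide
  · show φ (t * (t * (s))) = _
    simp only [map_mul, map_one, φs, φt]
    decide
  · show φ (s * (s * (t * (s)))) = _
    simp only [map_mul, map_one, φs, φt]
    decide
  · show φ (s * (s * (t * (t)))) = _
    simp only [map_mul, map_one, φs, φt]
    decide
  · show φ (s * (t * (s * (s)))) = _
    simp only [map_mul, map_one, φs, φt]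
    decide
  · show φ (s * (t * (t * (s)))) = _
    simp only [map_mul, map_one, φs, φt]
    decide
  · show φ (t * (s * (s * (t)))) = _
    simp only [map_mul, map_one, φs, φt]
    decide
  · show φ (t * (t * (s * (s)))) = _
    simp only [map_mul, map_one, φs, φt]
    decide
  · show φ (s * (s * (t * (s * (s))))) = _
    simp only [map_mul, map_one, φs, φt]
    decide
  · show φ (s * (s * (t * (t * (s))))) = _
    simp only [map_mul, map_one, φs, φt]
    decide
  · show φ (s * (t * (s * (s * (t))))) = _
    simp only [map_mul, map_one, φs, φt]
    decide
  · show φ (s * (t * (t * (s * (s))))) = _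
    simp only [map_mul, map_one, φs, φt]
    decide
  · show φ (s * (s * (t * (s * (s * (t)))))) = _
    simp only [map_mul, map_one, φs, φt]
    decide
  · show φ (s * (s * (t * (t * (s * (s)))))) = _
    simp only [map_mul, map_one, φs, φt]
    decide


theorem hsurjf : Function.Surjective f := by
  have hrange : Set.range (PresentedGroup.of : Fin 2 → G4) = {s, t} := by
    ext x
    constructor
    · rintro ⟨i, rfl⟩
      fin_cases i
      · exact Or.inl rfl
      · exact Or.inr rfl
    · rintro (rfl | rfl)
      exacts [⟨0, rfl⟩, ⟨1, rfl⟩]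
  have hgen : Subgroup.closure ({s, t} : Set G4) = ⊤ := by
    rw [← hrange]; exact PresentedGroup.closure_range_of rels
  have hmono : ∀ g : G4, g ∈ Submonoid.closure (({s,t} : Set G4) ∪ ({s,t} : Set G4)⁻¹) := by
    intro g
    have h1 : g ∈ Subgroup.closure ({s,t} : Set G4) := hgen ▸ Subgroup.mem_top g
    rw [← Subgroup.mem_toSubmonoid, Subgroup.closure_toSubmonoid] at h1
    exact h1
  have hcs' : ∀ x ∈ Set.range f, x * s ∈ Set.range f := by
    rintro x ⟨i, rfl⟩
    obtain ⟨j, hj⟩ := hcs i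
    exact ⟨j, hj.symm⟩
  have hct' : ∀ x ∈ Set.range f, x * t ∈ Set.range f := by
    rintro x ⟨i, rfl⟩
    obtain ⟨j, hj⟩ := hct i
    exact ⟨j, hj.symm⟩
  have key : ∀ g : G4, ∀ x ∈ Set.range f, x * g ∈ Set.range f := by
    intro g
    refine Submonoid.closure_induction
      (motive := fun g _ => ∀ x ∈ Set.range f, x * g ∈ Set.range f) ?_ ?_ ?_ (hmono g)
    · rintro y (hy | hy)
      · simp only [Set.mem_insert_iff, Set.mem_singleton_iff] at hy
        rcases hy with rfl | rfl
        · exact hcs'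
        · exact hct'
      · rw [Set.mem_inv] at hy
        simp only [Set.mem_insert_iff, Set.mem_singleton_iff] at hy
        rcases hy with hy | hy
        · have hys : y = s⁻¹ := by rw [← hy, inv_inv]
          have h1 : s⁻¹ = s * s := by
            apply inv_eq_of_mul_eq_one_left
            rw [mul_assoc]; exact hs1
          intro x hx
          rw [hys, h1, ← mul_assoc]
          exact hcs' _ (hcs' _ hx)
        · have hys : y = t⁻¹ := by rw [← hy, inv_inv]
          have h1 : t⁻¹ = t * t := by
            apply inv_eq_of_mul_eq_one_left
            rw [mul_assoc]; exact ht1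
          intro x hx
          rw [hys, h1, ← mul_assoc]
          exact hct' _ (hct' _ hx)
    · intro x hx
      simpa using hx
    · intro a b _ _ Ha Hb x hx
      rw [← mul_assoc]
      exact Hb _ (Ha _ hx)
  intro g
  have h0 : (1 : G4) ∈ Set.range f := by
    refine ⟨(0 : Fin 24), ?_⟩
    rfl
  obtain ⟨i, hi⟩ := key g 1 h0
  exact ⟨i, by simpa using hi⟩

instance : Finite G4 := Finite.of_surjective f hsurjf

theorem hφsurj : Function.Surjective φ := by
  intro m
  obtain ⟨i, hi⟩ := (by decide : ∀ m : SL23, ∃ i : Fin 24, w24 i = m) m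
  exact ⟨f i, by rw [hφf i, hi]⟩

theorem cardSL : Nat.card SL23 = 24 := by
  rw [Nat.card_eq_fintype_card]; decide

theorem hcard : Nat.card G4 = 24 := by
  have h1 : Nat.card G4 ≤ 24 := by
    simpa using Nat.card_le_card_of_surjective f hsurjf
  have h2 : 24 ≤ Nat.card G4 := by
    have h := Nat.card_le_card_of_surjective φ hφsurj
    rwa [cardSL] at h
  omega

theorem hφbij : Function.Bijective φ :=
  (Nat.bijective_iff_surjective_and_card φ).mpr ⟨hφsurj, by rw [hcard, cardSL]⟩

def z : G4 := (s * t) ^ 3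

theorem hzs : z * s = s * z := by
  calc z * s = (s * (t * (s * (t * (s * t))))) * s := by
        simp only [z, pow_succ, pow_zero, one_mul, mul_assoc]
  _ = s * (s * (t * (s * (t * (s * t))))) := eq48
  _ = s * z := by simp only [z, pow_succ, pow_zero, one_mul, mul_assoc]

theorem hzt : z * t = t * z := by
  calc z * t = (s * (t * (s * (t * (s * t))))) * t := by
        simp only [z, pow_succ, pow_zero, one_mul, mul_assoc]
  _ = t * (s * (t * (s * (t * (s * t))))) := eq49
  _ = t * z := by simp only [z, pow_succ, pow_zero, one_mul, mul_assoc]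

theorem hzc : z ∈ Subgroup.center G4 := by
  rw [Subgroup.mem_center_iff]
  intro g
  have hcom : ∀ j : Fin 2, PresentedGroup.of j ∈ Subgroup.centralizer {z} := by
    intro j
    rw [Subgroup.mem_centralizer_iff]
    intro y hy
    rw [Set.mem_singleton_iff] at hy
    subst hy
    fin_cases j
    · exact hzs
    · exact hzt
  have hg : g ∈ Subgroup.centralizer {z} :=
    PresentedGroup.generated_by rels (Subgroup.centralizer {z}) hcom g
  rw [Subgroup.mem_centralizer_iff] at hg
  exact (hg z rfl).symm

theorem hφz : φ z = (A * B) ^ 3 := by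
  simp only [z, map_pow, map_mul, φs, φt]

theorem hcenter_iff : ∀ x : G4, x ∈ Subgroup.center G4 ↔ (x = 1 ∨ x = z) := by
  intro x
  constructor
  · intro hx
    have hmat : ∀ g : SL23, g * φ x = φ x * g := by
      intro m
      obtain ⟨y, rfl⟩ := hφsurj m
      rw [← map_mul, ← map_mul, Subgroup.mem_center_iff.mp hx y]
    have hx2 := (by decide :
      ∀ m : SL23, (∀ g : SL23, g * m = m * g) ↔ (m = 1 ∨ m = (A*B)^3)) (φ x) |>.mp hmat
    rcases hx2 with h | h
    · left; exact hφbij.injective (by rw [h, map_one])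
    · right; exact hφbij.injective (by rw [h, hφz])
  · rintro (rfl | rfl)
    · exact Subgroup.one_mem _
    · exact hzc

theorem hcentereq : Subgroup.center G4 = Subgroup.zpowers z := by
  apply le_antisymm
  · intro x hx
    rcases (hcenter_iff x).mp hx with rfl | rfl
    · exact Subgroup.one_mem _
    · exact Subgroup.mem_zpowers z
  · exact Subgroup.zpowers_le.mpr hzc

theorem hordz : orderOf z = 2 := by
  have hz2 : z ^ 2 = 1 := by
    apply hφbij.injective
    rw [map_pow, hφz, map_one]
    decide
  have hz1 : z ≠ 1 := by
    intro h
    apply (by decide : ((A*B)^3 : SL23) ≠ 1)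
    rw [← hφz, h, map_one]
  exact orderOf_eq_prime hz2 hz1

theorem hcardcenter : Nat.card (Subgroup.center G4) = 2 := by
  rw [hcentereq, Nat.card_zpowers, hordz]

/-- `G₄` has order 24, `(st)³` is central, and the center of `G₄` has order 2,
generated by `(st)³`. -/
theorem stmt_6 :
    Nat.card G4 = 24 ∧
    ((PresentedGroup.of 0 * PresentedGroup.of 1 : G4) ^ 3) ∈ Subgroup.center G4 ∧
    Nat.card (Subgroup.center G4) = 2 ∧
    Subgroup.center G4 =
      Subgroup.zpowers ((PresentedGroup.of 0 * PresentedGroup.of 1 : G4) ^ 3) := by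
  refine ⟨hcard, ?_, hcardcenter, ?_⟩
  · show z ∈ Subgroup.center G4
    exact hzc
  · show Subgroup.center G4 = Subgroup.zpowers z
    exact hcentereq

end Stmt6
end
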